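/- Merge-and-reduce correctness: let k ≥ 1 be an integer and ε ∈ (0,1). Suppose given weighted point sets C_{i,j} for 0 ≤ i ≤ k and 1 ≤ j ≤ 2^{k−i}, such that for every i ∈ {1,…,k} and j ∈ {1,…,2^{k−i}}, the set C_{i,j} is an (ε/(2k))-coreset of C_{i−1,2j−1} + C_{i−1,2j}. Then the root C_{k,1} is an ε-coreset of the total input Σ_{j=1}^{2^k} C_{0,j}. -/
import Mathlib


/-- The cost of a weighted point set `μ : X →₀ ℝ` with respect to a query `q`,
distance function `dist` and exponent `z`: `cost(μ,q) = Σ_p μ(p) · dist(p,q)^z`. -/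
noncomputable def coresetCost {X Q : Type*} (dist : X → Q → ℝ) (z : ℝ)
    (μ : X →₀ ℝ) (q : Q) : ℝ :=
  μ.sum fun p w => w * dist p q ^ z

/-- `w` is an `ε`-coreset of `μ`: for every query `q`,
`(1−ε)·cost(μ,q) ≤ cost(w,q) ≤ (1+ε)·cost(μ,q)`. -/
def IsCoreset {X Q : Type*} (dist : X → Q → ℝ) (z : ℝ) (ε : ℝ)
    (μ w : X →₀ ℝ) : Prop :=
  ∀ q : Q, (1 - ε) * coresetCost dist z μ q ≤ coresetCost dist z w q ∧
    coresetCost dist z w q ≤ (1 + ε) * coresetCost dist z μ q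

lemma coresetCost_add {X Q : Type*} (dist : X → Q → ℝ) (z : ℝ) (μ ν : X →₀ ℝ) (q : Q) :
    coresetCost dist z (μ + ν) q = coresetCost dist z μ q + coresetCost dist z ν q := by
  unfold coresetCost
  exact Finsupp.sum_add_index' (fun a => by ring) (fun a b₁ b₂ => by ring)

lemma coresetCost_nonneg {X Q : Type*} (dist : X → Q → ℝ) (z : ℝ)
    (hdist : ∀ p q, 0 ≤ dist p q) (μ : X →₀ ℝ) (hμ : ∀ p, 0 ≤ μ p) (q : Q) :
    0 ≤ coresetCost dist z μ q :=
  Finset.sum_nonneg fun p _ => mul_nonneg (hμ p) (Real.rpow_nonneg (hdist p q) z)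


lemma mr_step_bound (δ a b cL cR cP : ℝ) (i : ℕ) (hδle : 0 ≤ 1 - δ) (hδge : 0 ≤ 1 + δ)
    (h1 : (1 - δ) ^ i * a ≤ cL) (h2 : cL ≤ (1 + δ) ^ i * a)
    (h3 : (1 - δ) ^ i * b ≤ cR) (h4 : cR ≤ (1 + δ) ^ i * b)
    (h5 : (1 - δ) * (cL + cR) ≤ cP) (h6 : cP ≤ (1 + δ) * (cL + cR)) :
    (1 - δ) ^ (i + 1) * (a + b) ≤ cP ∧ cP ≤ (1 + δ) ^ (i + 1) * (a + b) := by
  constructor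
  · have e : (1 - δ) ^ (i + 1) * (a + b) = (1 - δ) * ((1 - δ) ^ i * a + (1 - δ) ^ i * b) := by
      ring
    rw [e]
    have := mul_le_mul_of_nonneg_left (show (1 - δ) ^ i * a + (1 - δ) ^ i * b ≤ cL + cR by
      linarith) hδle
    linarith
  · have e : (1 + δ) ^ (i + 1) * (a + b) = (1 + δ) * ((1 + δ) ^ i * a + (1 + δ) ^ i * b) := by
      ring
    rw [e]
    have := mul_le_mul_of_nonneg_left (show cL + cR ≤ (1 + δ) ^ i * a + (1 + δ) ^ i * b by
      linarith) hδge
    linarith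


lemma mr_pow_bounds (k : ℕ) (ε δ : ℝ) (hδ0 : 0 < δ) (hδ1 : δ ≤ 1 / 2)
    (hkδ : (k : ℝ) * δ = ε / 2) (hε0 : 0 < ε) (hε1 : ε < 1) :
    1 - ε ≤ (1 - δ) ^ k ∧ (1 + δ) ^ k ≤ 1 + ε := by
  have hbern : 1 - ε / 2 ≤ (1 - δ) ^ k := by
    have h := one_add_mul_le_pow (a := -δ) (show (-2:ℝ) ≤ -δ by linarith) k
    calc (1:ℝ) - ε / 2 = 1 + (k:ℝ) * (-δ) := by rw [← hkδ]; ring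
      _ ≤ (1 + -δ) ^ k := h
      _ = (1 - δ) ^ k := by ring_nf
  refine ⟨by linarith, ?_⟩
  have hprod : (1 - δ) ^ k * (1 + δ) ^ k ≤ 1 := by
    rw [← mul_pow]
    refine pow_le_one₀ (by nlinarith) (by nlinarith)
  have hP : (0:ℝ) < (1 - δ) ^ k := pow_pos (by linarith) k
  nlinarith [pow_nonneg (show (0:ℝ) ≤ 1 + δ by linarith) k]

/-- Merge-and-reduce correctness: if `C i j` (for `0 ≤ i ≤ k`, `1 ≤ j ≤ 2^(k−i)`) is a
binary tree of weighted point sets in which each `C i j` with `i ≥ 1` is an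
`(ε/(2k))`-coreset of `C (i−1) (2j−1) + C (i−1) (2j)`, then the root `C k 1` is an
`ε`-coreset of the total input `Σ_{j=1}^{2^k} C 0 j`. -/
theorem merge_and_reduce_correct {X Q : Type*} (dist : X → Q → ℝ) (z : ℝ)
    (hdist : ∀ p q, 0 ≤ dist p q) (hz : 0 ≤ z)
    (k : ℕ) (hk : 1 ≤ k) (ε : ℝ) (hε0 : 0 < ε) (hε1 : ε < 1)
    (C : ℕ → ℕ → (X →₀ ℝ))
    (hbase : ∀ j, 1 ≤ j → j ≤ 2 ^ k → ∀ p, 0 ≤ C 0 j p)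
    (hcoreset : ∀ i, 1 ≤ i → i ≤ k → ∀ j, 1 ≤ j → j ≤ 2 ^ (k - i) →
      IsCoreset dist z (ε / (2 * k)) (C (i - 1) (2 * j - 1) + C (i - 1) (2 * j)) (C i j)) :
    IsCoreset dist z ε (∑ j ∈ Finset.Icc 1 (2 ^ k), C 0 j) (C k 1) := by
  set δ := ε / (2 * k) with hδdef
  have hk1 : (1:ℝ) ≤ (k:ℝ) := by exact_mod_cast hk
  have hδ0 : 0 < δ := div_pos hε0 (by positivity)
  have hkδ : (k:ℝ) * δ = ε / 2 := by
    rw [hδdef]; field_simp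
  have hδ1 : δ ≤ 1 / 2 := by nlinarith [mul_le_mul_of_nonneg_right hk1 hδ0.le]
  clear_value δ
  -- nonnegativity of sums of leaves
  have hsumnn : ∀ (s : Finset ℕ), (∀ j ∈ s, 1 ≤ j ∧ j ≤ 2 ^ k) → ∀ q : Q,
      0 ≤ coresetCost dist z (∑ j ∈ s, C 0 j) q := by
    intro s hs q
    refine coresetCost_nonneg dist z hdist _ (fun p => ?_) q
    rw [Finset.sum_apply']
    exact Finset.sum_nonneg fun j hj => hbase j (hs j hj).1 (hs j hj).2 p
  -- key induction on levels
  have key : ∀ i, i ≤ k → ∀ j, 1 ≤ j → j ≤ 2 ^ (k - i) → ∀ q,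
      (1 - δ) ^ i *
        coresetCost dist z (∑ j' ∈ Finset.Ioc ((j - 1) * 2 ^ i) (j * 2 ^ i), C 0 j') q ≤
        coresetCost dist z (C i j) q ∧
      coresetCost dist z (C i j) q ≤
        (1 + δ) ^ i *
          coresetCost dist z (∑ j' ∈ Finset.Ioc ((j - 1) * 2 ^ i) (j * 2 ^ i), C 0 j') q := by
    intro i
    induction i with
    | zero =>
      intro _ j hj1 hj2 q
      have hI : Finset.Ioc ((j - 1) * 2 ^ 0) (j * 2 ^ 0) = {j} := by
        ext m; simp; omega
      rw [hI]
      simp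
    | succ i ih =>
      intro hik j hj1 hj2 q
      obtain ⟨j', rfl⟩ : ∃ j'', j = j'' + 1 := ⟨j - 1, by omega⟩
      have hik' : i ≤ k := by omega
      have hpow : 2 ^ (k - i) = 2 * 2 ^ (k - (i + 1)) := by
        rw [← pow_succ']
        congr 1
        omega
      -- children indices
      have hL := ih hik' (2 * j' + 1) (by omega) (by omega)
      have hR := ih hik' (2 * j' + 2) (by omega) (by omega)
      have hcs := hcoreset (i + 1) (by omega) hik (j' + 1) (by omega) hj2 q
      simp only [Nat.add_sub_cancel] at hcs
      have hch1 : 2 * (j' + 1) - 1 = 2 * j' + 1 := by omega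
      have hch2 : 2 * (j' + 1) = 2 * j' + 2 := by omega
      rw [hch1, hch2, coresetCost_add] at hcs
      -- interval splitting
      have e1 : (2 * j' + 1 - 1) * 2 ^ i = (j' + 1 - 1) * 2 ^ (i + 1) := by
        simp [pow_succ]; ring
      have e2 : (2 * j' + 2 - 1) * 2 ^ i = (2 * j' + 1) * 2 ^ i := by
        congr 1
      have e3 : (2 * j' + 2) * 2 ^ i = (j' + 1) * 2 ^ (i + 1) := by
        rw [pow_succ]; ring
      have hsplit :
          (∑ j'' ∈ Finset.Ioc ((j' + 1 - 1) * 2 ^ (i + 1)) ((2 * j' + 1) * 2 ^ i), C 0 j'') +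
            ∑ j'' ∈ Finset.Ioc ((2 * j' + 1) * 2 ^ i) ((j' + 1) * 2 ^ (i + 1)), C 0 j'' =
          ∑ j'' ∈ Finset.Ioc ((j' + 1 - 1) * 2 ^ (i + 1)) ((j' + 1) * 2 ^ (i + 1)), C 0 j'' := by
        refine Finset.sum_Ioc_consecutive _ ?_ ?_
        · simp [pow_succ]; nlinarith [Nat.one_le_two_pow (n := i)]
        · rw [pow_succ]; nlinarith [Nat.one_le_two_pow (n := i)]
      rw [e1] at hL
      rw [e2, e3] at hR
      obtain ⟨hL1, hL2⟩ := hL q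
      obtain ⟨hR1, hR2⟩ := hR q
      set SL := coresetCost dist z
        (∑ j'' ∈ Finset.Ioc ((j' + 1 - 1) * 2 ^ (i + 1)) ((2 * j' + 1) * 2 ^ i), C 0 j'') q with hSL
      set SR := coresetCost dist z
        (∑ j'' ∈ Finset.Ioc ((2 * j' + 1) * 2 ^ i) ((j' + 1) * 2 ^ (i + 1)), C 0 j'') q with hSR
      have hS : coresetCost dist z
          (∑ j'' ∈ Finset.Ioc ((j' + 1 - 1) * 2 ^ (i + 1)) ((j' + 1) * 2 ^ (i + 1)), C 0 j'') q
          = SL + SR := by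
        rw [← hsplit, coresetCost_add]
      have hleafbound : (j' + 1) * 2 ^ (i + 1) ≤ 2 ^ k := by
        calc (j' + 1) * 2 ^ (i + 1) ≤ 2 ^ (k - (i + 1)) * 2 ^ (i + 1) :=
              Nat.mul_le_mul_right _ hj2
          _ = 2 ^ k := by rw [← pow_add]; congr 1; omega
      have hSLnn : 0 ≤ SL := by
        refine hsumnn _ (fun j'' hj'' => ?_) q
        simp only [Finset.mem_Ioc] at hj''
        refine ⟨by omega, ?_⟩
        calc j'' ≤ (2 * j' + 1) * 2 ^ i := hj''.2
          _ ≤ (j' + 1) * 2 ^ (i + 1) := by rw [pow_succ]; nlinarith [Nat.one_le_two_pow (n := i)]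
          _ ≤ 2 ^ k := hleafbound
      have hSRnn : 0 ≤ SR := by
        refine hsumnn _ (fun j'' hj'' => ?_) q
        simp only [Finset.mem_Ioc] at hj''
        exact ⟨by omega, le_trans hj''.2 hleafbound⟩
      rw [hS]
      exact mr_step_bound δ SL SR _ _ _ i (by linarith) (by linarith)
        hL1 hL2 hR1 hR2 hcs.1 hcs.2
  -- apply at the root
  intro q
  have hroot := key k le_rfl 1 le_rfl (by simpa using Nat.one_le_two_pow) q
  have hI : Finset.Ioc ((1 - 1) * 2 ^ k) (1 * 2 ^ k) = Finset.Icc 1 (2 ^ k) := by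
    ext m; simp; omega
  rw [hI] at hroot
  set S := coresetCost dist z (∑ j ∈ Finset.Icc 1 (2 ^ k), C 0 j) q with hSdef
  have hSnn : 0 ≤ S := by
    refine hsumnn _ (fun j hj => ?_) q
    simp only [Finset.mem_Icc] at hj
    exact hj
  clear_value S
  obtain ⟨hdown, hup⟩ := mr_pow_bounds k ε δ hδ0 hδ1 hkδ hε0 hε1
  have hlow : (1 - ε) * S ≤ (1 - δ) ^ k * S :=
    mul_le_mul_of_nonneg_right hdown hSnn
  exact ⟨le_trans hlow hroot.1,
    le_trans hroot.2 (mul_le_mul_of_nonneg_right hup hSnn)⟩
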